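/- For all α, β, γ ∈ ℝ, the product exp(−iαJ_z)·exp(−iβJ_y)·exp(−iγJ_z) equals the explicit matrix U(α,β,γ) = [[e^{−i(α+γ)}cos²(β/2), −(e^{−iα}/√2)·sin β, e^{−i(α−γ)}sin²(β/2)], [(e^{−iγ}/√2)·sin β, cos β, −(e^{iγ}/√2)·sin β], [e^{i(α−γ)}sin²(β/2), (e^{iα}/√2)·sin β, e^{i(α+γ)}cos²(β/2)]]. -/

import Mathlib

/-!
`J_z` is diagonal, so `exp(c • J_z) = diag(e^c, 1, e^{-c})`. The generator `J_y` has the same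
spectrum `{1, 0, -1}`, hence `J_y = S J_z S⁻¹` for an eigenbasis matrix `S`, and
`exp(-iβ J_y) = S diag(e^{-iβ}, 1, e^{iβ}) S⁻¹`; expanding `e^{∓iβ} = cos β ∓ i sin β` and using
`cos²(β/2) = (1 + cos β)/2` gives the Wigner matrix `d(β)`. Multiplying `d(β)` by the two diagonal
phase matrices on either side yields `U(α, β, γ)` entry by entry.
-/

open Matrix

/-- The spin-1 generator `J_y`. -/
noncomputable def Jy : Matrix (Fin 3) (Fin 3) ℂ :=
  (1 / (Real.sqrt 2 : ℂ)) • !![0, -Complex.I, 0; Complex.I, 0, -Complex.I; 0, Complex.I, 0]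

/-- The spin-1 generator `J_z`. -/
noncomputable def Jz : Matrix (Fin 3) (Fin 3) ℂ := !![1, 0, 0; 0, 0, 0; 0, 0, -1]

/-- The Wigner matrix `U(α,β,γ)` of the spin-1 `ZYZ` Euler parameterization. -/
noncomputable def Umat (α β γ : ℝ) : Matrix (Fin 3) (Fin 3) ℂ :=
  !![Complex.exp (-Complex.I * (↑α + ↑γ)) * (Real.cos (β/2) : ℂ)^2,
       -(Complex.exp (-Complex.I * ↑α) / (Real.sqrt 2 : ℂ)) * (Real.sin β : ℂ),
       Complex.exp (-Complex.I * (↑α - ↑γ)) * (Real.sin (β/2) : ℂ)^2;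
     (Complex.exp (-Complex.I * ↑γ) / (Real.sqrt 2 : ℂ)) * (Real.sin β : ℂ),
       (Real.cos β : ℂ),
       -(Complex.exp (Complex.I * ↑γ) / (Real.sqrt 2 : ℂ)) * (Real.sin β : ℂ);
     Complex.exp (Complex.I * (↑α - ↑γ)) * (Real.sin (β/2) : ℂ)^2,
       (Complex.exp (Complex.I * ↑α) / (Real.sqrt 2 : ℂ)) * (Real.sin β : ℂ),
       Complex.exp (Complex.I * (↑α + ↑γ)) * (Real.cos (β/2) : ℂ)^2]

theorem Matrix.exp_conj_of_mul_eq_one {n 𝔸 : Type*} [Fintype n] [DecidableEq n]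
    [NormedCommRing 𝔸] [NormedAlgebra ℚ 𝔸] [CompleteSpace 𝔸]
    {S T : Matrix n n 𝔸} (h : S * T = 1) (A : Matrix n n 𝔸) :
    NormedSpace.exp (S * A * T) = S * NormedSpace.exp A * T :=
  Matrix.exp_units_conj ⟨S, T, h, mul_eq_one_comm.mp h⟩ A

theorem ofReal_sqrt_two_sq : ((Real.sqrt 2 : ℝ) : ℂ) ^ 2 = 2 := by
  norm_cast
  exact Real.sq_sqrt zero_le_two

theorem exp_I_mul_ofReal (x : ℝ) :
    Complex.exp (Complex.I * x) = Real.cos x + Real.sin x * Complex.I := by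
  rw [mul_comm, Complex.exp_mul_I]
  simp

theorem exp_neg_I_mul_ofReal (x : ℝ) :
    Complex.exp (-(Complex.I * x)) = Real.cos x - Real.sin x * Complex.I := by
  rw [show -(Complex.I * x) = (-x : ℂ) * Complex.I by ring, Complex.exp_mul_I]
  simp
  ring

theorem exp_smul_Jz (c : ℂ) :
    NormedSpace.exp (c • Jz) = !![Complex.exp c, 0, 0; 0, 1, 0; 0, 0, Complex.exp (-c)] := by
  have hdiag : c • Jz = diagonal ![c, 0, -c] := by
    ext i j; fin_cases i <;> fin_cases j <;> simp [Jz]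
  rw [hdiag, exp_diagonal]
  ext i j; fin_cases i <;> fin_cases j <;> simp [Pi.exp_def, ← Complex.exp_eq_exp_ℂ]

noncomputable def JyEigenbasis : Matrix (Fin 3) (Fin 3) ℂ :=
  !![1, 1, 1; Complex.I * (Real.sqrt 2 : ℂ), 0, -(Complex.I * (Real.sqrt 2 : ℂ)); -1, 1, -1]

noncomputable def JyEigenbasisInv : Matrix (Fin 3) (Fin 3) ℂ :=
  !![1/4, -(Complex.I * (Real.sqrt 2 : ℂ))/4, -1/4;
     1/2, 0, 1/2;
     1/4, (Complex.I * (Real.sqrt 2 : ℂ))/4, -1/4]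

theorem JyEigenbasis_mul_inv : JyEigenbasis * JyEigenbasisInv = 1 := by
  ext i j
  fin_cases i <;> fin_cases j <;>
    simp [JyEigenbasis, JyEigenbasisInv, mul_apply, Fin.sum_univ_succ, one_apply] <;>
    grind [ofReal_sqrt_two_sq, Complex.I_sq]

theorem Jy_eq_conj_Jz : Jy = JyEigenbasis * Jz * JyEigenbasisInv := by
  ext i j
  fin_cases i <;> fin_cases j <;>
    simp [JyEigenbasis, JyEigenbasisInv, Jy, Jz, mul_apply, Fin.sum_univ_succ] <;>
    grind [ofReal_sqrt_two_sq, Complex.I_sq]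

theorem exp_smul_Jy (c : ℂ) : NormedSpace.exp (c • Jy) =
    JyEigenbasis * !![Complex.exp c, 0, 0; 0, 1, 0; 0, 0, Complex.exp (-c)] * JyEigenbasisInv := by
  rw [Jy_eq_conj_Jz, ← smul_mul_assoc, ← mul_smul_comm,
    exp_conj_of_mul_eq_one JyEigenbasis_mul_inv, exp_smul_Jz]

theorem exp_neg_I_mul_smul_Jy (β : ℝ) : NormedSpace.exp ((-(Complex.I * β)) • Jy) =
    !![(Real.cos (β/2) : ℂ)^2, -(Real.sin β : ℂ) / (Real.sqrt 2 : ℂ), (Real.sin (β/2) : ℂ)^2;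
       (Real.sin β : ℂ) / (Real.sqrt 2 : ℂ), (Real.cos β : ℂ), -(Real.sin β : ℂ) / (Real.sqrt 2 : ℂ);
       (Real.sin (β/2) : ℂ)^2, (Real.sin β : ℂ) / (Real.sqrt 2 : ℂ), (Real.cos (β/2) : ℂ)^2] := by
  have hcos : (Real.cos (β/2) : ℂ)^2 = (1 + Real.cos β) / 2 := by
    rw [← Complex.ofReal_pow, Real.cos_sq, show 2 * (β / 2) = β by ring]; push_cast; ring
  have hsin : (Real.sin (β/2) : ℂ)^2 = (1 - Real.cos β) / 2 := by
    rw [← Complex.ofReal_pow, Real.sin_sq, Real.cos_sq, show 2 * (β / 2) = β by ring]; push_cast; ring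
  rw [exp_smul_Jy, neg_neg, exp_neg_I_mul_ofReal, exp_I_mul_ofReal, hcos, hsin]
  ext i j
  fin_cases i <;> fin_cases j <;>
    simp [JyEigenbasis, JyEigenbasisInv, mul_apply, Fin.sum_univ_succ] <;>
    grind [ofReal_sqrt_two_sq, Complex.I_sq]

/-- the product `exp(−iαJ_z)·exp(−iβJ_y)·exp(−iγJ_z)` equals the
explicit Wigner matrix `U(α,β,γ)`, for all real `α, β, γ`. -/
theorem stmt3 (α β γ : ℝ) :
    NormedSpace.exp ((-(Complex.I * (α : ℂ))) • Jz)
      * NormedSpace.exp ((-(Complex.I * (β : ℂ))) • Jy)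
      * NormedSpace.exp ((-(Complex.I * (γ : ℂ))) • Jz) = Umat α β γ := by
  rw [exp_smul_Jz, exp_neg_I_mul_smul_Jy, exp_smul_Jz]
  ext i j
  fin_cases i <;> fin_cases j <;>
    simp [Umat, mul_apply, Fin.sum_univ_succ, Complex.exp_add, Complex.exp_sub, Complex.exp_neg,
      mul_add, mul_sub] <;>
    ring
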